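/- P(ℚ) is the disjoint union of B(ℚ) and the cosets B(ℚ)·γ_δ for δ ∈ ℚ, where γ_δ = [[β_δ, 0],[0, β_δ⁻ᵀ]] (block diagonal) and β_δ = [[0,1],[−1,0]]·[[1,δ],[0,1]]. That is: every p ∈ P(ℚ) lies in exactly one of these cosets, and for δ ≠ δ′ the cosets B(ℚ)γ_δ and B(ℚ)γ_{δ′} are disjoint. -/

import Mathlib

/-! The entries `p₂₁, p₂₂` (1-indexed) of `p ∈ P(ℚ)` decide its coset. If `p₂₁ = 0`, the similitude
relation `Aᵀ D = ν I` between the diagonal blocks of `p` forces `p₃₄ = 0`, so `p ∈ B(ℚ)`.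
Otherwise `δ = p₂₂ / p₂₁` is the unique parameter for which `p γ_δ⁻¹` has vanishing `(2,1)` entry,
and right multiplication by the block-diagonal symplectic matrix `γ_δ⁻¹` preserves `P(ℚ)`.
Conversely every `b γ_δ` with `b ∈ B(ℚ)` has `(2,1)` entry `-b₂₂ ≠ 0` and `(2,2)` entry `δ` times it. -/
open Matrix

noncomputable section

/-- The 4×4 matrix with 2×2 blocks `[[A, B], [C, D]]`. -/
def blk {R : Type*} (A B C D : Matrix (Fin 2) (Fin 2) R) : Matrix (Fin 4) (Fin 4) R :=
  !![A 0 0, A 0 1, B 0 0, B 0 1;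
     A 1 0, A 1 1, B 1 0, B 1 1;
     C 0 0, C 0 1, D 0 0, D 0 1;
     C 1 0, C 1 1, D 1 0, D 1 1]

/-- `J₂ = [[0, I₂], [−I₂, 0]] ∈ M₄(ℚ)`. -/
def J2 : Matrix (Fin 4) (Fin 4) ℚ := blk 0 1 (-1) 0

/-- Membership in `GSp₄(ℚ) = {g ∈ GL₄(ℚ) : gᵀ J₂ g = ν(g) J₂, ν(g) ∈ ℚˣ}`. -/
def IsGSp4 (g : Matrix (Fin 4) (Fin 4) ℚ) : Prop :=
  IsUnit g ∧ ∃ ν : ℚ, ν ≠ 0 ∧ gᵀ * J2 * g = ν • J2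

/-- The Weyl representatives `w₁ = I₄`, `w₂`, `w₃`, `w₄`. -/
def w1 : Matrix (Fin 4) (Fin 4) ℚ := 1

def w2 : Matrix (Fin 4) (Fin 4) ℚ :=
  !![0, 0, 1, 0;
     0, 1, 0, 0;
     -1, 0, 0, 0;
     0, 0, 0, 1]

def w3 : Matrix (Fin 4) (Fin 4) ℚ :=
  !![1, 0, 0, 0;
     0, 0, 0, 1;
     0, 0, 1, 0;
     0, -1, 0, 0]

def w4 : Matrix (Fin 4) (Fin 4) ℚ :=
  !![0, 0, 1, 0;
     0, 0, 0, 1;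
     1, 0, 0, 0;
     0, 1, 0, 0]

/-- Membership in the Siegel parabolic subgroup `P(ℚ)`: elements of `GSp₄(ℚ)` whose lower-left
2×2 block vanishes. -/
def memP (g : Matrix (Fin 4) (Fin 4) ℚ) : Prop :=
  IsGSp4 g ∧ g 2 0 = 0 ∧ g 2 1 = 0 ∧ g 3 0 = 0 ∧ g 3 1 = 0

/-- Membership in the Borel subgroup `B(ℚ)`: elements `g ∈ GSp₄(ℚ)` with
`g₂₁ = g₃₁ = g₃₂ = g₃₄ = g₄₁ = g₄₂ = 0` (1-indexed entries). -/
def memB (g : Matrix (Fin 4) (Fin 4) ℚ) : Prop :=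
  IsGSp4 g ∧ g 1 0 = 0 ∧ g 2 0 = 0 ∧ g 2 1 = 0 ∧ g 2 3 = 0 ∧ g 3 0 = 0 ∧ g 3 1 = 0

/-- `β_δ = [[0,1],[−1,0]]·[[1,δ],[0,1]] = [[0,1],[−1,−δ]]`. -/
def betaMat (δ : ℚ) : Matrix (Fin 2) (Fin 2) ℚ := !![0, 1; -1, 0] * !![1, δ; 0, 1]

/-- `γ_δ = [[β_δ, 0],[0, β_δ⁻ᵀ]]`. -/
def gammaMat (δ : ℚ) : Matrix (Fin 4) (Fin 4) ℚ :=
  blk (betaMat δ) 0 0 ((betaMat δ)⁻¹)ᵀ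

lemma betaMat_eq (δ : ℚ) : betaMat δ = !![0, 1; -1, -δ] := by
  ext i j; fin_cases i <;> fin_cases j <;> simp [betaMat]

lemma betaMat_inv_eq (δ : ℚ) : (betaMat δ)⁻¹ = !![-δ, -1; 1, 0] := by
  refine Matrix.inv_eq_right_inv ?_
  rw [betaMat_eq]
  ext i j; fin_cases i <;> fin_cases j <;> simp

lemma gammaMat_eq (δ : ℚ) :
    gammaMat δ = !![0, 1, 0, 0; -1, -δ, 0, 0; 0, 0, -δ, 1; 0, 0, -1, 0] := by
  rw [gammaMat, betaMat_inv_eq, betaMat_eq]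
  ext i j; fin_cases i <;> fin_cases j <;> simp [blk]

def gammaInv (δ : ℚ) : Matrix (Fin 4) (Fin 4) ℚ :=
  !![-δ, -1, 0, 0; 1, 0, 0, 0; 0, 0, 0, -1; 0, 0, 1, -δ]

lemma gammaInv_mul_gammaMat (δ : ℚ) : gammaInv δ * gammaMat δ = 1 := by
  rw [gammaMat_eq]
  ext i j; fin_cases i <;> fin_cases j <;> simp [gammaInv, mul_apply, Fin.sum_univ_four]

lemma transpose_mul_J2_mul_apply (g : Matrix (Fin 4) (Fin 4) ℚ) (i j : Fin 4) :
    (gᵀ * J2 * g) i j = g 0 i * g 2 j + g 1 i * g 3 j - g 2 i * g 0 j - g 3 i * g 1 j := by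
  simp [mul_apply, Fin.sum_univ_four, J2, blk]
  ring

lemma IsGSp4.mul {g h : Matrix (Fin 4) (Fin 4) ℚ} (hg : IsGSp4 g) (hh : IsGSp4 h) :
    IsGSp4 (g * h) := by
  obtain ⟨hg_unit, ν, hν, hgJ⟩ := hg
  obtain ⟨hh_unit, μ, hμ, hhJ⟩ := hh
  refine ⟨hg_unit.mul hh_unit, ν * μ, mul_ne_zero hν hμ, ?_⟩
  calc (g * h)ᵀ * J2 * (g * h) = hᵀ * (gᵀ * J2 * g) * h := by
        simp only [transpose_mul, Matrix.mul_assoc]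
    _ = (ν * μ) • J2 := by
        rw [hgJ, Matrix.mul_smul, Matrix.smul_mul, hhJ, smul_smul, mul_comm]

lemma isGSp4_gammaInv (δ : ℚ) : IsGSp4 (gammaInv δ) := by
  refine ⟨.of_mul_eq_one _ (gammaInv_mul_gammaMat δ), 1, one_ne_zero, ?_⟩
  ext i j
  rw [transpose_mul_J2_mul_apply]
  fin_cases i <;> fin_cases j <;> simp [gammaInv, J2, blk]

lemma memP.mul_gammaInv {p : Matrix (Fin 4) (Fin 4) ℚ} (hp : memP p) (δ : ℚ) :
    memP (p * gammaInv δ) := by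
  obtain ⟨hp_gsp, h20, h21, h30, h31⟩ := hp
  refine ⟨hp_gsp.mul (isGSp4_gammaInv δ), ?_, ?_, ?_, ?_⟩ <;>
    simp [gammaInv, mul_apply, Fin.sum_univ_four, h20, h21, h30, h31]

lemma memB_of_memP_of_apply_one_zero {p : Matrix (Fin 4) (Fin 4) ℚ} (hp : memP p)
    (h10 : p 1 0 = 0) : memB p := by
  obtain ⟨⟨hp_unit, ν, hν, hJ⟩, h20, h21, h30, h31⟩ := hp
  have entry (j : Fin 4) : p 0 0 * p 2 j = ν * J2 0 j := by
    have := congr_fun₂ hJ 0 j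
    rw [transpose_mul_J2_mul_apply] at this
    simpa [h10, h20, h30] using this
  have e02 : p 0 0 * p 2 2 = ν := by simpa [J2, blk] using entry 2
  have e03 : p 0 0 * p 2 3 = 0 := by simpa [J2, blk] using entry 3
  have hp00 : p 0 0 ≠ 0 := left_ne_zero_of_mul (e02 ▸ hν)
  exact ⟨⟨hp_unit, ν, hν, hJ⟩, h10, h20, h21, (mul_eq_zero.1 e03).resolve_left hp00, h30, h31⟩

lemma memB.apply_one_one_ne_zero {b : Matrix (Fin 4) (Fin 4) ℚ} (hb : memB b) : b 1 1 ≠ 0 := by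
  obtain ⟨⟨-, ν, hν, hJ⟩, -, -, h21, h23, -, h31⟩ := hb
  have e13 : b 1 1 * b 3 3 = ν := by
    have := congr_fun₂ hJ 1 3
    rw [transpose_mul_J2_mul_apply] at this
    simpa [J2, blk, h21, h23, h31] using this
  exact left_ne_zero_of_mul (e13 ▸ hν)

lemma mul_gammaInv_apply_one_zero (g : Matrix (Fin 4) (Fin 4) ℚ) (δ : ℚ) :
    (g * gammaInv δ) 1 0 = g 1 1 - δ * g 1 0 := by
  simp [gammaInv, mul_apply, Fin.sum_univ_four]
  ring

lemma memB.mul_gammaMat_apply_one_zero_ne_zero {b : Matrix (Fin 4) (Fin 4) ℚ} (hb : memB b)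
    (δ : ℚ) : (b * gammaMat δ) 1 0 ≠ 0 := by
  simpa [gammaMat_eq, mul_apply, Fin.sum_univ_four] using hb.apply_one_one_ne_zero

lemma memB.mul_gammaMat_apply_one_one {b : Matrix (Fin 4) (Fin 4) ℚ} (hb : memB b) (δ : ℚ) :
    (b * gammaMat δ) 1 1 = δ * (b * gammaMat δ) 1 0 := by
  simp [gammaMat_eq, mul_apply, Fin.sum_univ_four, hb.2.1, mul_comm]

theorem stmt6 :
    -- every p ∈ P(ℚ) lies in B(ℚ) or in some B(ℚ)·γ_δ
    (∀ p : Matrix (Fin 4) (Fin 4) ℚ, memP p →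
      memB p ∨ ∃ (δ : ℚ) (b : Matrix (Fin 4) (Fin 4) ℚ), memB b ∧ p = b * gammaMat δ) ∧
    -- B(ℚ) is disjoint from every coset B(ℚ)·γ_δ
    (∀ (δ : ℚ) (b b' : Matrix (Fin 4) (Fin 4) ℚ), memB b → memB b' → b ≠ b' * gammaMat δ) ∧
    -- for δ ≠ δ′ the cosets B(ℚ)·γ_δ and B(ℚ)·γ_δ′ are disjoint
    (∀ δ δ' : ℚ, δ ≠ δ' → ∀ b b' : Matrix (Fin 4) (Fin 4) ℚ, memB b → memB b' →
      b * gammaMat δ ≠ b' * gammaMat δ') := by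
  refine ⟨fun p hp => ?_, fun δ b b' hb hb' h => ?_, fun δ δ' hne b b' hb hb' h => ?_⟩
  · by_cases h10 : p 1 0 = 0
    · exact .inl (memB_of_memP_of_apply_one_zero hp h10)
    refine .inr ⟨p 1 1 / p 1 0, p * gammaInv (p 1 1 / p 1 0),
      memB_of_memP_of_apply_one_zero (hp.mul_gammaInv _) ?_, ?_⟩
    · rw [mul_gammaInv_apply_one_zero, div_mul_cancel₀ _ h10, sub_self]
    · rw [Matrix.mul_assoc, gammaInv_mul_gammaMat, Matrix.mul_one]
  · exact hb'.mul_gammaMat_apply_one_zero_ne_zero δ (h ▸ hb.2.1)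
  · have h11 := congr_fun₂ h 1 1
    rw [hb.mul_gammaMat_apply_one_one, hb'.mul_gammaMat_apply_one_one, ← h] at h11
    exact hne (mul_right_cancel₀ (hb.mul_gammaMat_apply_one_zero_ne_zero δ) h11)
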